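/- arXiv:1203.2393 — 3 statements merged into one kernel-verified Lean document; each statement's English description precedes it below -/
import Mathlib

section
/- Fix u ∈ (0,1), λ_f > 0 and T > 0. For N ≥ 2 let T_c(N) = T/(N−1), let Γ(N) = e^{−λ_f T_c(N)/u}, and let I_m(u,N) be the Fisher information for estimating u from N uniformly spaced samples, given by I_m(u,N) = (M_1+M_2+M_3+M_4+M_5)/(u³(1−u)(1−Γ)(Γ+u−Γu)(Γu−u+1)) with M_1 = Γ²·λ_f T_c·(N−1)·(1−u)·[λ_f T_c(1−u)(1+Γ) − 2u(1−2u)(1−Γ)], M_2 = Γ³u²[u(u−1)(3N−2)+(N−1)], M_3 = −Γ²u²[u(u−1)(7N−4)+(2N−1)], M_4 = Γu²[N(5u²−5u+1)+2u(1−u)], M_5 = Nu³(1−u), evaluated at Γ = Γ(N) and T_c = T_c(N). Then lim_{N→∞} I_m(u,N)^{−1} = u(1−u)/(1 + λ_f T/u). -/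
/-!
Put `x = λ_f T_c / u`, so that `Γ = e^{-x}`, `N - 1 = a / x` with `a = λ_f T / u`, and
`1 - Γ = x h` with `h = (1 - e^{-x}) / x → 1`. The part of `M₂ + ⋯ + M₅` linear in `N` carries
the factor `(1 - Γ)²` and the rest the factor `1 - Γ`, so numerator and denominator of `I_m`
are both `x` times polynomials in `(Γ, h, x)`. Cancelling `x` and letting `(Γ, h, x) → (1, 1, 0)`
gives `I_m⁻¹ → u³(1 - u) / (u²(1 + a))`.
-/

open Filter Topology Real

/-- The paper's `I_m(u, N)`, with the sample count `N` taken real. -/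
noncomputable def fisherInfoU (u lf T N : ℝ) : ℝ :=
  let Tc : ℝ := T / (N - 1)
  let Γ : ℝ := Real.exp (-(lf * Tc) / u)
  let M1 : ℝ := Γ ^ 2 * (lf * Tc) * (N - 1) * (1 - u) *
    (lf * Tc * (1 - u) * (1 + Γ) - 2 * u * (1 - 2 * u) * (1 - Γ))
  let M2 : ℝ := Γ ^ 3 * u ^ 2 * (u * (u - 1) * (3 * N - 2) + (N - 1))
  let M3 : ℝ := -(Γ ^ 2 * u ^ 2 * (u * (u - 1) * (7 * N - 4) + (2 * N - 1)))
  let M4 : ℝ := Γ * u ^ 2 * (N * (5 * u ^ 2 - 5 * u + 1) + 2 * u * (1 - u))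
  let M5 : ℝ := N * u ^ 3 * (1 - u)
  (M1 + M2 + M3 + M4 + M5) /
    (u ^ 3 * (1 - u) * (1 - Γ) * (Γ + u - Γ * u) * (Γ * u - u + 1))

/-- Numerator of `I_m` divided by `x`, in the variables `Γ`, `h`, `x` and `a` of the header. -/
def reducedNum (u a Γ h x : ℝ) : ℝ :=
  Γ ^ 2 * u * a * (1 - u) * (u * (1 - u) * (1 + Γ) - 2 * u * (1 - 2 * u) * h)
    + u ^ 2 * Γ * h * ((2 * u * (u - 1) + 1) * Γ - 2 * u * (u - 1))
    + (x + a) * h ^ 2 * u ^ 2 * ((3 * u * (u - 1) + 1) * Γ - u * (u - 1))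

def reducedDen (u Γ h : ℝ) : ℝ :=
  u ^ 3 * (1 - u) * h * (Γ + u - Γ * u) * (Γ * u - u + 1)

lemma fisherInfoU_eq_reduced {u lf T N x : ℝ} (hu : u ≠ 0) (hlfT : lf * T ≠ 0)
    (hxN : x * (N - 1) = lf * T / u) :
    fisherInfoU u lf T N =
      reducedNum u (lf * T / u) (exp (-x)) ((1 - exp (-x)) / x) x /
        reducedDen u (exp (-x)) ((1 - exp (-x)) / x) := by
  have hprod : x * (N - 1) ≠ 0 := hxN ▸ div_ne_zero hlfT hu
  have hx : x ≠ 0 := left_ne_zero_of_mul hprod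
  have hN : N - 1 ≠ 0 := right_ne_zero_of_mul hprod
  have hTc : lf * (T / (N - 1)) = u * x := by
    rw [mul_div_assoc', div_eq_iff hN, ← div_mul_cancel₀ (lf * T) hu, ← hxN]
    ring
  have hexp : -(u * x) / u = -x := by field_simp
  simp only [fisherInfoU, hTc, hexp]
  generalize lf * T / u = a at hxN ⊢
  obtain rfl : N = a / x + 1 := by field_simp; linear_combination hxN
  generalize exp (-x) = Γ
  rw [← mul_div_mul_left (reducedNum u a Γ ((1 - Γ) / x) x) _ hx]
  congr 1
  · simp only [reducedNum]
    field_simp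
    ring
  · simp only [reducedDen]
    field_simp

lemma tendsto_one_sub_exp_neg_div_self :
    Tendsto (fun x : ℝ => (1 - exp (-x)) / x) (𝓝[≠] 0) (𝓝 1) := by
  have hd : HasDerivAt (fun x => 1 - exp (-x)) 1 0 := by
    simpa using ((hasDerivAt_neg (0 : ℝ)).exp).const_sub 1
  refine hd.tendsto_slope.congr fun x => ?_
  simp [slope_def_field]

lemma tendsto_reducedDen_div_reducedNum {u a : ℝ} (hu : u ≠ 0) (ha : 1 + a ≠ 0) :
    Tendsto (fun x => reducedDen u (exp (-x)) ((1 - exp (-x)) / x) /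
        reducedNum u a (exp (-x)) ((1 - exp (-x)) / x) x) (𝓝[≠] 0)
      (𝓝 (u * (1 - u) / (1 + a))) := by
  have hΓ : Tendsto (fun x : ℝ => exp (-x)) (𝓝[≠] 0) (𝓝 1) := by
    simpa using (continuous_neg.rexp.tendsto 0).mono_left nhdsWithin_le_nhds
  have hx : Tendsto (fun x : ℝ => x) (𝓝[≠] 0) (𝓝 0) := nhdsWithin_le_nhds
  have hnum : reducedNum u a 1 1 0 = u ^ 2 * (1 + a) := by unfold reducedNum; ring
  have hcont : ContinuousAt
      (fun p : ℝ × ℝ × ℝ => reducedDen u p.1 p.2.1 / reducedNum u a p.1 p.2.1 p.2.2) (1, 1, 0) := by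
    refine ContinuousAt.div (by unfold reducedDen; fun_prop) (by unfold reducedNum; fun_prop) ?_
    rw [hnum]
    positivity
  have hval : reducedDen u 1 1 / reducedNum u a 1 1 0 = u * (1 - u) / (1 + a) := by
    rw [hnum, reducedDen]
    field_simp
    ring
  have hlim := hcont.tendsto.comp
    (hΓ.prodMk_nhds (tendsto_one_sub_exp_neg_div_self.prodMk_nhds hx))
  rwa [hval] at hlim

lemma tendsto_const_div_natCast_sub_one_nhdsNE {a : ℝ} (ha : a ≠ 0) :
    Tendsto (fun N : ℕ => a / ((N : ℝ) - 1)) atTop (𝓝[≠] 0) := by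
  refine tendsto_nhdsWithin_iff.mpr ⟨?_, ?_⟩
  · exact (tendsto_atTop_add_const_right _ (-1) tendsto_natCast_atTop_atTop).const_div_atTop a
  · filter_upwards [eventually_ge_atTop 2] with N hN
    have : (2 : ℝ) ≤ N := by exact_mod_cast hN
    exact div_ne_zero ha (by linarith)

theorem cramer_rao_u_limit_general (u lf T : ℝ)
    (hu : 0 < u) (hlf : 0 < lf) (hT : 0 < T) :
    Filter.Tendsto
      (fun N : ℕ =>
        (let Tc : ℝ := T / ((N : ℝ) - 1)
         let Γ : ℝ := Real.exp (-(lf * Tc) / u)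
         let M1 : ℝ := Γ ^ 2 * (lf * Tc) * ((N : ℝ) - 1) * (1 - u) *
           (lf * Tc * (1 - u) * (1 + Γ) - 2 * u * (1 - 2 * u) * (1 - Γ))
         let M2 : ℝ := Γ ^ 3 * u ^ 2 * (u * (u - 1) * (3 * (N : ℝ) - 2) + ((N : ℝ) - 1))
         let M3 : ℝ := -(Γ ^ 2 * u ^ 2 * (u * (u - 1) * (7 * (N : ℝ) - 4) + (2 * (N : ℝ) - 1)))
         let M4 : ℝ := Γ * u ^ 2 * ((N : ℝ) * (5 * u ^ 2 - 5 * u + 1) + 2 * u * (1 - u))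
         let M5 : ℝ := (N : ℝ) * u ^ 3 * (1 - u)
         (M1 + M2 + M3 + M4 + M5) /
           (u ^ 3 * (1 - u) * (1 - Γ) * (Γ + u - Γ * u) * (Γ * u - u + 1)))⁻¹)
      Filter.atTop
      (nhds (u * (1 - u) / (1 + lf * T / u))) := by
  change Tendsto (fun N : ℕ => (fisherInfoU u lf T N)⁻¹) atTop _
  have ha : 0 < lf * T / u := by positivity
  have hx := tendsto_const_div_natCast_sub_one_nhdsNE ha.ne'
  refine ((tendsto_reducedDen_div_reducedNum hu.ne' (by positivity)).comp hx).congr' ?_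
  filter_upwards [eventually_ge_atTop 2] with N hN
  have hN : (N : ℝ) - 1 ≠ 0 := by
    have : (2 : ℝ) ≤ N := by exact_mod_cast hN
    linarith
  rw [Function.comp_apply, fisherInfoU_eq_reduced hu.ne' (by positivity) (div_mul_cancel₀ _ hN),
    inv_div]

/-- the Cramér–Rao bound `I_m(u,N)⁻¹` for estimating the duty
cycle `u` from `N` uniformly spaced samples over a fixed window `T`
(inter-sample time `T_c(N) = T/(N-1)`, `Γ(N) = e^{-λ_f T_c(N)/u}`) tends to
`u(1-u)/(1 + λ_f T/u)` as `N → ∞`. -/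
theorem cramer_rao_u_limit (u lf T : ℝ)
    (hu : 0 < u) (hu1 : u < 1) (hlf : 0 < lf) (hT : 0 < T) :
    Filter.Tendsto
      (fun N : ℕ =>
        (let Tc : ℝ := T / ((N : ℝ) - 1)
         let Γ : ℝ := Real.exp (-(lf * Tc) / u)
         let M1 : ℝ := Γ ^ 2 * (lf * Tc) * ((N : ℝ) - 1) * (1 - u) *
           (lf * Tc * (1 - u) * (1 + Γ) - 2 * u * (1 - 2 * u) * (1 - Γ))
         let M2 : ℝ := Γ ^ 3 * u ^ 2 * (u * (u - 1) * (3 * (N : ℝ) - 2) + ((N : ℝ) - 1))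
         let M3 : ℝ := -(Γ ^ 2 * u ^ 2 * (u * (u - 1) * (7 * (N : ℝ) - 4) + (2 * (N : ℝ) - 1)))
         let M4 : ℝ := Γ * u ^ 2 * ((N : ℝ) * (5 * u ^ 2 - 5 * u + 1) + 2 * u * (1 - u))
         let M5 : ℝ := (N : ℝ) * u ^ 3 * (1 - u)
         (M1 + M2 + M3 + M4 + M5) /
           (u ^ 3 * (1 - u) * (1 - Γ) * (Γ + u - Γ * u) * (Γ * u - u + 1)))⁻¹)
      Filter.atTop
      (nhds (u * (1 - u) / (1 + lf * T / u))) :=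
  cramer_rao_u_limit_general u lf T hu hlf hT
end

section
/- For the PU on–off sampling model under uniform sampling, fix u ∈ (0,1) and T_c > 0, regard the likelihood L(z; λ_f) = u^{z_1}(1−u)^{1−z_1}·∏_{k=1}^{N−1} Pr_{z_k z_{k+1}}(T_c; λ_f) as a function of λ_f > 0 (with u fixed and Γ_c(λ_f) = e^{−λ_f T_c/u}), and define the Fisher information I_m(λ_f,N) = ∑_{z ∈ {0,1}^N} (∂/∂λ_f of log L(z; λ_f))² · L(z; λ_f). Then for N ≥ 2, writing Γ = Γ_c(λ_f), I_m(λ_f,N) = ( (Γ·T_c)²·(1−u)·(1+Γ)·(N−1) ) / ( u·(1−Γ)·[Γ + u·(1−Γ)²·(1−u)] ); equivalently the Cramér–Rao bound is I_m(λ_f,N)^{−1} = u(1−Γ)[Γ + u(1−Γ)²(1−u)] / ( (Γ T_c)²(1−u)(1+Γ)(N−1) ). -/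
/-!
The log-likelihood of a Markov path is a sum of one-step terms, so its derivative is the sum of
the one-step scores `∂P(x,y)/P(x,y)`. Because every row of `∂P` sums to zero, the one-step
scores are uncorrelated (each has conditional mean zero given the past), and because the chain
starts in its stationary law `(1 - u, u)`, each of the `N - 1` transitions contributes the same
one-step Fisher information `∑ₓ ν(x) ∑_y (∂P(x,y))² / P(x,y)`. For the on–off kernel this is
evaluated in closed form.
-/

open Finset

/-- Transition probabilities of the PU on-off process:
`transProb u lf t x y = Pr_{xy}(t)` where `false` = idle, `true` = active. -/
noncomputable def transProb (u lf t : ℝ) : Bool → Bool → ℝ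
  | false, false => 1 - u + u * Real.exp (-(lf * t) / u)
  | false, true  => 1 - (1 - u + u * Real.exp (-(lf * t) / u))
  | true,  true  => u + (1 - u) * Real.exp (-(lf * t) / u)
  | true,  false => 1 - (u + (1 - u) * Real.exp (-(lf * t) / u))

/-- Likelihood of a binary sample sequence `z` of length `n + 1`
with inter-sample times `T 1, …, T n`. -/
noncomputable def seqProb (u lf : ℝ) {n : ℕ} (T : ℕ → ℝ) (z : Fin (n + 1) → Bool) : ℝ :=
  (if z 0 then u else 1 - u) *
    ∏ k : Fin n, transProb u lf (T (k.val + 1)) (z k.castSucc) (z k.succ)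

section MarkovPath

variable {K α : Type*} [Field K]

def pathProb (ν : α → K) (P : α → α → K) {n : ℕ} (z : Fin (n + 1) → α) : K :=
  ν (z 0) * ∏ k : Fin n, P (z k.castSucc) (z k.succ)

def pathScore (Q P : α → α → K) {n : ℕ} (z : Fin (n + 1) → α) : K :=
  ∑ k : Fin n, Q (z k.castSucc) (z k.succ) / P (z k.castSucc) (z k.succ)

def transFisherInfo [Fintype α] (Q P : α → α → K) (x : α) : K :=
  ∑ y, Q x y ^ 2 / P x y

theorem sum_fin_tuple_snoc [Fintype α] {M : Type*} [AddCommMonoid M] {n : ℕ}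
    (g : (Fin (n + 1) → α) → M) :
    ∑ z, g z = ∑ z : Fin n → α, ∑ b, g (Fin.snoc z b) := by
  rw [← (Fin.snocEquiv fun _ => α).sum_comp, Fintype.sum_prod_type, sum_comm]
  rfl

theorem pathProb_snoc (ν : α → K) (P : α → α → K) {n : ℕ} (z : Fin (n + 1) → α) (b : α) :
    pathProb ν P (Fin.snoc z b) = pathProb ν P z * P (z (Fin.last n)) b := by
  simp only [pathProb, Fin.prod_univ_castSucc, Fin.succ_castSucc, Fin.snoc_castSucc,
    Fin.succ_last, Fin.snoc_last, mul_assoc]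
  rw [← Fin.castSucc_zero, Fin.snoc_castSucc]

theorem pathScore_snoc (Q P : α → α → K) {n : ℕ} (z : Fin (n + 1) → α) (b : α) :
    pathScore Q P (Fin.snoc z b) =
      pathScore Q P z + Q (z (Fin.last n)) b / P (z (Fin.last n)) b := by
  simp only [pathScore, Fin.sum_univ_castSucc, Fin.succ_castSucc, Fin.snoc_castSucc,
    Fin.succ_last, Fin.snoc_last]

theorem deriv_log_pathProb {ν : α → ℝ} {P : ℝ → α → α → ℝ} {Q : α → α → ℝ} {l₀ : ℝ}
    (hP : ∀ x y, HasDerivAt (fun l => P l x y) (Q x y) l₀) (hP0 : ∀ x y, P l₀ x y ≠ 0)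
    {n : ℕ} (z : Fin (n + 1) → α) (hν : ν (z 0) ≠ 0) :
    deriv (fun l => Real.log (pathProb ν (P l) z)) l₀ = pathScore Q (P l₀) z := by
  have hd : ∀ k ∈ univ, DifferentiableAt ℝ (fun l => P l (z (Fin.castSucc k)) (z k.succ)) l₀ :=
    fun k _ => (hP _ _).differentiableAt
  have h0 : ∀ k ∈ univ, P l₀ (z (Fin.castSucc k)) (z k.succ) ≠ 0 := fun k _ => hP0 _ _
  calc deriv (fun l => Real.log (pathProb ν (P l) z)) l₀
      = logDeriv (fun l => pathProb ν (P l) z) l₀ :=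
        Real.deriv_log_comp_eq_logDeriv ((DifferentiableAt.fun_finsetProd hd).const_mul _)
          (mul_ne_zero hν (prod_ne_zero_iff.2 h0))
    _ = ∑ k, logDeriv (fun l => P l (z (Fin.castSucc k)) (z k.succ)) l₀ := by
        unfold pathProb
        rw [logDeriv_const_mul _ _ hν, logDeriv_prod h0 hd]
    _ = pathScore Q (P l₀) z := by simp only [logDeriv_apply, (hP _ _).deriv]; rfl

variable [Fintype α] {ν : α → K} {P : α → α → K}

theorem sum_pathProb_mul_last (hν : ∀ y, ∑ x, ν x * P x y = ν y) (n : ℕ) (f : α → K) :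
    ∑ z : Fin (n + 1) → α, pathProb ν P z * f (z (Fin.last n)) = ∑ x, ν x * f x := by
  induction n generalizing f with
  | zero => simpa [pathProb] using (Equiv.funUnique (Fin 1) α).sum_comp fun a => ν a * f a
  | succ n ih =>
    calc _ = ∑ z : Fin (n + 1) → α, pathProb ν P z * ∑ y, P (z (Fin.last n)) y * f y := by
          simp only [sum_fin_tuple_snoc, pathProb_snoc, Fin.snoc_last, mul_sum, mul_assoc]
      _ = ∑ x, ν x * ∑ y, P x y * f y := ih fun x => ∑ y, P x y * f y
      _ = ∑ y, (∑ x, ν x * P x y) * f y := by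
          simp only [mul_sum, sum_mul, mul_assoc]; exact sum_comm
      _ = ∑ y, ν y * f y := by simp only [hν]

theorem sum_pathScore_sq_mul_pathProb {Q : α → α → K} (hν : ∀ y, ∑ x, ν x * P x y = ν y)
    (hP : ∀ x, ∑ y, P x y = 1) (hQ : ∀ x, ∑ y, Q x y = 0) (hP0 : ∀ x y, P x y ≠ 0) (n : ℕ) :
    ∑ z : Fin (n + 1) → α, pathScore Q P z ^ 2 * pathProb ν P z =
      n * ∑ x, ν x * transFisherInfo Q P x := by
  induction n with
  | zero => simp [pathScore]
  | succ n ih =>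
    have hstep (z : Fin (n + 1) → α) :
        ∑ b, pathScore Q P (Fin.snoc z b) ^ 2 * pathProb ν P (Fin.snoc z b) =
          pathScore Q P z ^ 2 * pathProb ν P z +
            pathProb ν P z * transFisherInfo Q P (z (Fin.last n)) := by
      simp only [pathScore_snoc, pathProb_snoc, transFisherInfo]
      generalize z (Fin.last n) = x
      have hterm (b : α) : (pathScore Q P z + Q x b / P x b) ^ 2 * (pathProb ν P z * P x b) =
          pathScore Q P z ^ 2 * pathProb ν P z * P x b
            + 2 * pathScore Q P z * pathProb ν P z * Q x b
            + pathProb ν P z * (Q x b ^ 2 / P x b) := by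
        field_simp [hP0 x b]; ring
      simp only [hterm, sum_add_distrib, ← mul_sum, hP, hQ]
      ring
    rw [sum_fin_tuple_snoc, sum_congr rfl fun z _ => hstep z, sum_add_distrib, ih,
      sum_pathProb_mul_last hν]
    push_cast; ring

end MarkovPath

section OnOff

variable {u lf t : ℝ}

noncomputable def onOffLaw (u : ℝ) (x : Bool) : ℝ := if x then u else 1 - u

noncomputable def transProbDeriv (u lf t : ℝ) : Bool → Bool → ℝ
  | false, false => -(t * Real.exp (-(lf * t) / u))
  | false, true  => t * Real.exp (-(lf * t) / u)
  | true,  true  => -((1 - u) / u * t * Real.exp (-(lf * t) / u))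
  | true,  false => (1 - u) / u * t * Real.exp (-(lf * t) / u)

theorem seqProb_const_eq_pathProb {n : ℕ} (z : Fin (n + 1) → Bool) :
    seqProb u lf (fun _ => t) z = pathProb (onOffLaw u) (transProb u lf t) z := rfl

theorem hasDerivAt_transProb (hu : u ≠ 0) (x y : Bool) :
    HasDerivAt (fun l => transProb u l t x y) (transProbDeriv u lf t x y) lf := by
  have hexp : HasDerivAt (fun l => Real.exp (-(l * t) / u))
      (Real.exp (-(lf * t) / u) * (-t / u)) lf := by
    simpa using (((hasDerivAt_id lf).mul_const t).neg.div_const u).exp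
  cases x <;> cases y <;> simp only [transProb, transProbDeriv]
  · exact ((hexp.const_mul u).const_add (1 - u)).congr_deriv (by field_simp)
  · exact (((hexp.const_mul u).const_add (1 - u)).const_sub 1).congr_deriv (by field_simp)
  · exact (((hexp.const_mul (1 - u)).const_add u).const_sub 1).congr_deriv (by field_simp)
  · exact ((hexp.const_mul (1 - u)).const_add u).congr_deriv (by field_simp)

theorem sum_transProb (x : Bool) : ∑ y, transProb u lf t x y = 1 := by
  cases x <;> simp only [Fintype.sum_bool, transProb] <;> ring

theorem sum_transProbDeriv (x : Bool) : ∑ y, transProbDeriv u lf t x y = 0 := by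
  cases x <;> simp only [Fintype.sum_bool, transProbDeriv] <;> ring

theorem sum_onOffLaw_mul_transProb (y : Bool) :
    ∑ x, onOffLaw u x * transProb u lf t x y = onOffLaw u y := by
  cases y <;> simp only [Fintype.sum_bool, onOffLaw, transProb, if_true, Bool.false_eq_true,
    if_false] <;> ring

theorem exp_neg_mul_div_lt_one (hu : 0 < u) (hlt : 0 < lf * t) : Real.exp (-(lf * t) / u) < 1 :=
  Real.exp_lt_one_iff.2 (div_neg_of_neg_of_pos (neg_neg_of_pos hlt) hu)

variable (hu : 0 < u) (hu1 : u < 1) (hlt : 0 < lf * t)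
include hu hu1 hlt

theorem transProb_pos (x y : Bool) : 0 < transProb u lf t x y := by
  have hΓ₀ := Real.exp_pos (-(lf * t) / u)
  have hΓ₁ := exp_neg_mul_div_lt_one hu hlt
  cases x <;> cases y <;> simp only [transProb] <;> nlinarith

theorem sum_onOffLaw_mul_transFisherInfo {Γ : ℝ} (hΓ : Real.exp (-(lf * t) / u) = Γ) :
    ∑ x, onOffLaw u x * transFisherInfo (transProbDeriv u lf t) (transProb u lf t) x =
      (Γ * t) ^ 2 * (1 - u) * (1 + Γ) / (u * (1 - Γ) * (Γ + u * (1 - Γ) ^ 2 * (1 - u))) := by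
  have hΓ₀ : 0 < Γ := hΓ ▸ Real.exp_pos _
  have hΓ₁ : Γ < 1 := hΓ ▸ exp_neg_mul_div_lt_one hu hlt
  have h00 : 1 - u + u * Γ ≠ 0 := by nlinarith
  have h01 : 1 - (1 - u + u * Γ) ≠ 0 := by nlinarith
  have h10 : 1 - (u + (1 - u) * Γ) ≠ 0 := by nlinarith
  have h11 : u + (1 - u) * Γ ≠ 0 := by nlinarith
  have hΓ1 : 1 - Γ ≠ 0 := by linarith
  -- the bracket in the denominator is the product of the two holding probabilities
  have hbracket : Γ + u * (1 - Γ) ^ 2 * (1 - u) = (1 - u + u * Γ) * (u + (1 - u) * Γ) := by ring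
  simp only [Fintype.sum_bool, onOffLaw, transFisherInfo, transProb, transProbDeriv, hΓ, if_true,
    Bool.false_eq_true, if_false]
  rw [hbracket]
  field_simp
  ring

end OnOff

theorem fisher_information_lambda_f_general (u lf Tc : ℝ)
    (hu : 0 < u) (hu1 : u < 1) (hlf : 0 < lf) (hTc : 0 < Tc)
    (n : ℕ) :
    let Γ : ℝ := Real.exp (-(lf * Tc) / u)
    ∑ z : Fin (n + 1) → Bool,
        (deriv (fun l => Real.log (seqProb u l (fun _ => Tc) z)) lf) ^ 2
          * seqProb u lf (fun _ => Tc) z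
      = (Γ * Tc) ^ 2 * (1 - u) * (1 + Γ) * (n : ℝ) /
          (u * (1 - Γ) * (Γ + u * (1 - Γ) ^ 2 * (1 - u))) := by
  intro Γ
  have hlt := mul_pos hlf hTc
  have hP0 (x y : Bool) := (transProb_pos hu hu1 hlt x y).ne'
  have hν0 (x : Bool) : onOffLaw u x ≠ 0 := by
    cases x
    · exact (sub_pos.2 hu1).ne'
    · exact hu.ne'
  calc _ = ∑ z : Fin (n + 1) → Bool, pathScore (transProbDeriv u lf Tc) (transProb u lf Tc) z ^ 2
          * pathProb (onOffLaw u) (transProb u lf Tc) z := by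
        refine sum_congr rfl fun z _ => ?_
        simp only [seqProb_const_eq_pathProb]
        rw [deriv_log_pathProb (hasDerivAt_transProb hu.ne') hP0 z (hν0 _)]
    _ = n * ∑ x, onOffLaw u x * transFisherInfo (transProbDeriv u lf Tc) (transProb u lf Tc) x :=
        sum_pathScore_sq_mul_pathProb sum_onOffLaw_mul_transProb sum_transProb sum_transProbDeriv
          hP0 n
    _ = _ := by rw [sum_onOffLaw_mul_transFisherInfo hu hu1 hlt rfl]; ring

/-- closed form of the Fisher information
`I_m(λ_f,N) = ∑_z (∂/∂λ_f log L(z;λ_f))² L(z;λ_f)` for estimating the departure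
rate `λ_f` under uniform sampling with inter-sample time `T_c`, `u` held fixed
and `N = n + 1 ≥ 2` samples:
`I_m(λ_f,N) = (Γ T_c)²(1-u)(1+Γ)(N-1) / (u(1-Γ)[Γ + u(1-Γ)²(1-u)])`. -/
theorem fisher_information_lambda_f (u lf Tc : ℝ)
    (hu : 0 < u) (hu1 : u < 1) (hlf : 0 < lf) (hTc : 0 < Tc)
    (n : ℕ) (hn : 1 ≤ n) :
    let Γ : ℝ := Real.exp (-(lf * Tc) / u)
    ∑ z : Fin (n + 1) → Bool,
        (deriv (fun l => Real.log (seqProb u l (fun _ => Tc) z)) lf) ^ 2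
          * seqProb u lf (fun _ => Tc) z
      = (Γ * Tc) ^ 2 * (1 - u) * (1 + Γ) * (n : ℝ) /
          (u * (1 - Γ) * (Γ + u * (1 - Γ) ^ 2 * (1 - u))) :=
  fisher_information_lambda_f_general u lf Tc hu hu1 hlf hTc n
end

section
/- Fix u ∈ (0,1), λ_f > 0 and T > 0. For N ≥ 2 let T_c(N) = T/(N−1), Γ(N) = e^{−λ_f T_c(N)/u}, and let I_m(λ_f,N)^{−1} = u·(1−Γ(N))·[Γ(N) + u(1−Γ(N))²(1−u)] / ( (Γ(N)·T_c(N))²·(1−u)·(1+Γ(N))·(N−1) ) be the Cramér–Rao bound for estimating λ_f from N uniformly spaced samples over the window T. Then lim_{N→∞} I_m(λ_f,N)^{−1} = λ_f / ( 2T·(1−u) ). -/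
/-!
With `x = T_c = T/(N-1)` the bound factors as `((1 - Γ)/x) · u(Γ + u(1-Γ)²(1-u)) / (Γ²(1-u)(1+Γ)T)`.
As `N → ∞`, `x → 0` through nonzero values, so `Γ → 1`: the first factor is a difference quotient
of `x ↦ e^{-λ_f x/u}` at `0` and tends to `λ_f/u`, while the second is continuous at `0` with
value `u/(2T(1-u))`.
-/

open Filter Topology

lemma tendsto_one_sub_exp_neg_mul_div (c : ℝ) :
    Tendsto (fun x : ℝ => (1 - Real.exp (-(c * x))) / x) (𝓝[≠] 0) (𝓝 c) := by
  have hderiv : HasDerivAt (fun x : ℝ => Real.exp (-(c * x))) (-c) 0 := by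
    simpa using ((hasDerivAt_id (0 : ℝ)).const_mul c).neg.exp
  have := (hasDerivAt_iff_tendsto_slope_zero.mp hderiv).neg
  simp only [neg_neg, zero_add, mul_zero, neg_zero, Real.exp_zero, smul_eq_mul] at this
  refine this.congr fun x => ?_
  ring

lemma tendsto_div_natCast_sub_one_nhdsNE {T : ℝ} (hT : T ≠ 0) :
    Tendsto (fun N : ℕ => T / ((N : ℝ) - 1)) atTop (𝓝[≠] 0) := by
  have hden : Tendsto (fun N : ℕ => (N : ℝ) - 1) atTop atTop :=
    tendsto_atTop_add_const_right _ (-1) tendsto_natCast_atTop_atTop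
  refine tendsto_nhdsWithin_of_tendsto_nhds_of_eventually_within _
    (tendsto_const_nhds.div_atTop hden) ?_
  filter_upwards [hden.eventually_gt_atTop 0] with N hN
  exact div_ne_zero hT hN.ne'

theorem cramer_rao_lambda_f_limit_general (u lf T : ℝ)
    (hu : 0 < u) (hu1 : u < 1) (hT : 0 < T) :
    Filter.Tendsto
      (fun N : ℕ =>
        let Tc : ℝ := T / ((N : ℝ) - 1)
        let Γ : ℝ := Real.exp (-(lf * Tc) / u)
        u * (1 - Γ) * (Γ + u * (1 - Γ) ^ 2 * (1 - u)) /
          ((Γ * Tc) ^ 2 * (1 - u) * (1 + Γ) * ((N : ℝ) - 1)))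
      Filter.atTop
      (nhds (lf / (2 * T * (1 - u)))) := by
  set Γ : ℝ → ℝ := fun x => Real.exp (-(lf * x) / u) with hΓ
  have hΓ0 : Γ 0 = 1 := by simp [hΓ]
  have hslope : Tendsto (fun x => (1 - Γ x) / x) (𝓝[≠] 0) (𝓝 (lf / u)) := by
    convert tendsto_one_sub_exp_neg_mul_div (lf / u) using 4 with x
    simp only [hΓ]
    ring_nf
  have hrest : Tendsto (fun x => u * (Γ x + u * (1 - Γ x) ^ 2 * (1 - u)) /
      (Γ x ^ 2 * (1 - u) * (1 + Γ x) * T)) (𝓝[≠] 0) (𝓝 (u / (2 * T * (1 - u)))) := by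
    have hcont : ContinuousAt (fun x => u * (Γ x + u * (1 - Γ x) ^ 2 * (1 - u)) /
        (Γ x ^ 2 * (1 - u) * (1 + Γ x) * T)) 0 := by
      refine ContinuousAt.div (by fun_prop) (by fun_prop) ?_
      rw [hΓ0]
      nlinarith
    convert hcont.tendsto.mono_left nhdsWithin_le_nhds using 2
    rw [hΓ0]
    ring
  have hlim := (hslope.mul hrest).comp (tendsto_div_natCast_sub_one_nhdsNE hT.ne')
  rw [show lf / (2 * T * (1 - u)) = lf / u * (u / (2 * T * (1 - u))) by field_simp]
  refine hlim.congr' ?_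
  filter_upwards [eventually_gt_atTop 1] with N hN1
  have hN : (N : ℝ) - 1 ≠ 0 := sub_ne_zero.mpr (by exact_mod_cast hN1.ne')
  simp only [Function.comp_apply, hΓ]
  generalize Real.exp (-(lf * (T / ((N : ℝ) - 1))) / u) = g
  field_simp

/-- the Cramér–Rao bound
`I_m(λ_f,N)⁻¹ = u(1-Γ)[Γ + u(1-Γ)²(1-u)] / ((Γ T_c)²(1-u)(1+Γ)(N-1))`
for estimating the departure rate `λ_f` from `N` uniformly spaced samples over
a fixed window `T` (inter-sample time `T_c(N) = T/(N-1)`,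
`Γ(N) = e^{-λ_f T_c(N)/u}`) tends to `λ_f/(2T(1-u))` as `N → ∞`. -/
theorem cramer_rao_lambda_f_limit (u lf T : ℝ)
    (hu : 0 < u) (hu1 : u < 1) (hlf : 0 < lf) (hT : 0 < T) :
    Filter.Tendsto
      (fun N : ℕ =>
        let Tc : ℝ := T / ((N : ℝ) - 1)
        let Γ : ℝ := Real.exp (-(lf * Tc) / u)
        u * (1 - Γ) * (Γ + u * (1 - Γ) ^ 2 * (1 - u)) /
          ((Γ * Tc) ^ 2 * (1 - u) * (1 + Γ) * ((N : ℝ) - 1)))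
      Filter.atTop
      (nhds (lf / (2 * T * (1 - u)))) :=
  cramer_rao_lambda_f_limit_general u lf T hu hu1 hT
end
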